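/- (Unitarity property of the Gassner invariant.) Let K be a field, n ≥ 2, t₁,…,t_n ∈ K with t_j ≠ 0 and t_j ≠ 1 for all j, and let c : K → K be a ring homomorphism with c(t_j) = t_j⁻¹ for all j. Let w = ((i₁,s₁),…,(i_k,s_k)) be a braid word on n strands, with associated permutations τ₀,…,τ_k, over-strand indices j₁,…,j_k, and Gassner invariant Γ(w). Then Γ(w) is invertible and Ω(τ_k)·Γ(w)⁻¹ = Γ(w)̄ᵀ·Ω(ι). -/

import Mathlib

open Matrix

/-- `U K n i t` is the `n × n` matrix over `K` (1-indexed rows/columns `1,…,n`) that equals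
the identity matrix except that its `2 × 2` block in rows `i, i+1` and columns `i, i+1`
is `((1-t, 1), (t, 0))`.  A row index `r : Fin n` corresponds to the 1-indexed row `r.val + 1`. -/
def GassnerU (K : Type*) [CommRing K] (n : ℕ) (i : ℕ) (t : K) : Matrix (Fin n) (Fin n) K :=
  Matrix.of fun r c =>
    if r.val + 1 = i ∧ c.val + 1 = i then 1 - t
    else if r.val + 1 = i ∧ c.val = i then 1
    else if r.val = i ∧ c.val + 1 = i then t
    else if r.val = i ∧ c.val = i then 0
    else if r = c then 1 else 0

/-- `Ω(τ)`: the `n × n` matrix with diagonal entries `(1 - t (τ r))⁻¹`, entries below the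
diagonal equal to `1`, and entries above the diagonal equal to `0`. -/
def GassnerOmega {K : Type*} [Field K] {n : ℕ} (t : Fin n → K) (τ : Equiv.Perm (Fin n)) :
    Matrix (Fin n) (Fin n) K :=
  Matrix.of fun r c => if r = c then (1 - t (τ r))⁻¹ else if c < r then 1 else 0

/-- The strand position `i` (1-indexed), as an element of `Fin n`, for a braid generator
index `i` encoded as an element of `Fin (n-1)` (so `i : Fin (n-1)` stands for `σ_{i+1}`,
crossing the strands at 1-indexed positions `i.val + 1` and `i.val + 2`). -/
def strandLo {n : ℕ} (i : Fin (n - 1)) : Fin n := ⟨i.val, by have := i.isLt; omega⟩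

/-- The strand position `i + 1` (1-indexed), as an element of `Fin n`. -/
def strandHi {n : ℕ} (i : Fin (n - 1)) : Fin n := ⟨i.val + 1, by have := i.isLt; omega⟩

/-- A braid word on `n` strands is a list of pairs `(i, s)` where `i : Fin (n-1)` encodes a
generator `σ_{i+1}` and `s : Bool` encodes its sign (`true` for `+1`, `false` for `-1`).
`braidPerm n w` is the permutation of the `n` strands induced by the word `w`
(the product, in order, of the transpositions `(i_α, i_α + 1)`). -/
def braidPerm (n : ℕ) : List (Fin (n - 1) × Bool) → Equiv.Perm (Fin n)
  | [] => 1
  | p :: w => Equiv.swap (strandLo p.1) (strandHi p.1) * braidPerm n w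

/-- The Gassner invariant of a braid word, relative to the permutation `τ` induced by the
braid below it: the ordered product of the matrices `U_{n;i_α}(t_{j_α})^{s_α}`, where `j_α` is
the index of the over strand at crossing `α` (namely `τ_{α-1}(i_α)` for a positive crossing
and `τ_{α-1}(i_α + 1)` for a negative one). -/
noncomputable def gassner {K : Type*} [Field K] {n : ℕ} (t : Fin n → K) :
    Equiv.Perm (Fin n) → List (Fin (n - 1) × Bool) → Matrix (Fin n) (Fin n) K
  | _, [] => 1
  | τ, p :: w =>
      (if p.2 then GassnerU K n (p.1.val + 1) (t (τ (strandLo p.1)))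
       else (GassnerU K n (p.1.val + 1) (t (τ (strandHi p.1))))⁻¹) *
        gassner t (τ * Equiv.swap (strandLo p.1) (strandHi p.1)) w

/-! Write `Ā` for `A.map c` and say that `A` carries `Ω` to `Ω'` when `A` is invertible and
`Āᵀ Ω A = Ω'`; such matrices compose and invert like the arrows of a groupoid. The generator
`U = U_{n;i}(t_{τ(i)})` of a positive crossing carries `Ω(τ)` to `Ω(τ ∘ (i, i+1))`: outside the
rows and columns `i, i+1` this only uses that `Ω(τ)` is constant on each side of the diagonal, and
on the `2 × 2` block it is the identity `c(t) = t⁻¹`. Invertibility of `U` is then automatic, as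
`Ω(τ ∘ (i, i+1))` is triangular with nonzero diagonal. A negative crossing is the inverse of the
positive crossing read from `τ ∘ (i, i+1)`, whose over strand is `τ(i+1)`. Multiplying along the
word, `Γ(w)` carries `Ω(ι)` to `Ω(τ_k)`, which is the claim. -/

namespace Matrix

variable {m R : Type*} [Fintype m] [CommRing R]

theorem map_transpose_mul_mul_eq_transpose_mul_transpose (f : R → R) (M U : Matrix m m R) :
    (U.map f)ᵀ * M * U = ((M * U)ᵀ * U.map f)ᵀ := by
  rw [transpose_mul, transpose_transpose, Matrix.mul_assoc]

variable [DecidableEq m] (c : R →+* R)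

def IsSesqIsometry (Ω Ω' A : Matrix m m R) : Prop :=
  IsUnit A ∧ (A.map c)ᵀ * Ω * A = Ω'

variable {c}

theorem isUnit_of_map_transpose_mul_mul_eq {Ω Ω' A : Matrix m m R}
    (h : (A.map c)ᵀ * Ω * A = Ω') (hΩ' : IsUnit Ω'.det) : IsUnit A := by
  rw [← h, det_mul] at hΩ'
  exact (isUnit_iff_isUnit_det A).2 (isUnit_of_mul_isUnit_right hΩ')

namespace IsSesqIsometry

variable {Ω Ω' Ω'' A B : Matrix m m R}

theorem one : IsSesqIsometry c Ω Ω 1 :=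
  ⟨isUnit_one, by simp⟩

theorem mul (hA : IsSesqIsometry c Ω Ω' A) (hB : IsSesqIsometry c Ω' Ω'' B) :
    IsSesqIsometry c Ω Ω'' (A * B) := by
  refine ⟨hA.1.mul hB.1, ?_⟩
  rw [← hB.2, ← hA.2, Matrix.map_mul, transpose_mul]
  simp only [Matrix.mul_assoc]

theorem inv (hA : IsSesqIsometry c Ω Ω' A) : IsSesqIsometry c Ω' Ω A⁻¹ := by
  refine ⟨isUnit_nonsing_inv_iff.2 hA.1, ?_⟩
  calc ((A⁻¹).map c)ᵀ * Ω' * A⁻¹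
      = ((A * A⁻¹).map c)ᵀ * Ω * (A * A⁻¹) := by
        rw [← hA.2, Matrix.map_mul, transpose_mul]; simp only [Matrix.mul_assoc]
    _ = Ω := by simp [mul_nonsing_inv A ((isUnit_iff_isUnit_det A).1 hA.1)]

theorem mul_inv_eq (hA : IsSesqIsometry c Ω Ω' A) : Ω' * A⁻¹ = (A.map c)ᵀ * Ω := by
  rw [← hA.2, mul_nonsing_inv_cancel_right _ _ ((isUnit_iff_isUnit_det A).1 hA.1)]

end IsSesqIsometry

end Matrix

section Gassner

variable {K : Type*} {n : ℕ}

theorem strandLo_lt_strandHi (i : Fin (n - 1)) : strandLo i < strandHi i := by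
  simp [strandLo, strandHi, Fin.lt_def]

theorem strandLo_ne_strandHi (i : Fin (n - 1)) : strandLo i ≠ strandHi i :=
  (strandLo_lt_strandHi i).ne

theorem lt_strandLo_iff_lt_strandHi {i : Fin (n - 1)} {x : Fin n} (hL : x ≠ strandLo i)
    (hH : x ≠ strandHi i) : x < strandLo i ↔ x < strandHi i := by
  simp only [Ne, Fin.ext_iff, Fin.lt_def, strandLo, strandHi] at *
  omega

theorem strandLo_lt_iff_strandHi_lt {i : Fin (n - 1)} {x : Fin n}
    (hH : x ≠ strandHi i) : strandLo i < x ↔ strandHi i < x := by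
  simp only [Ne, Fin.ext_iff, Fin.lt_def, strandLo, strandHi] at *
  omega

section CommRing

variable [CommRing K]

theorem GassnerU_apply (i : Fin (n - 1)) (t : K) (r c : Fin n) :
    GassnerU K n (i.val + 1) t r c =
      if c = strandLo i then (if r = strandLo i then 1 - t else if r = strandHi i then t else 0)
      else if c = strandHi i then (if r = strandLo i then 1 else 0)
      else if r = c then 1 else 0 := by
  simp only [GassnerU, Matrix.of_apply, strandLo, strandHi, Fin.ext_iff]
  split_ifs <;> first | rfl | (exfalso; omega)

theorem GassnerU_map (c : K →+* K) (i : ℕ) (t : K) :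
    (GassnerU K n i t).map c = GassnerU K n i (c t) := by
  ext r s
  simp only [GassnerU, Matrix.map_apply, Matrix.of_apply]
  split_ifs <;> simp

theorem mul_GassnerU_apply (M : Matrix (Fin n) (Fin n) K) (i : Fin (n - 1)) (t : K)
    (r c : Fin n) :
    (M * GassnerU K n (i.val + 1) t) r c =
      if c = strandLo i then M r (strandLo i) * (1 - t) + M r (strandHi i) * t
      else if c = strandHi i then M r (strandLo i)
      else M r c := by
  have hLH := strandLo_ne_strandHi i
  simp only [Matrix.mul_apply, GassnerU_apply]
  split_ifs
  · rw [Fintype.sum_eq_add _ _ hLH (fun l hl => by simp [hl.1, hl.2])]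
    simp [hLH.symm]
  · simp
  · simp

end CommRing

variable [Field K]

theorem GassnerU_map_transpose_mul_GassnerOmega_mul (t : Fin n → K) (c : K →+* K)
    (τ : Equiv.Perm (Fin n)) (i : Fin (n - 1)) (ht0 : t (τ (strandLo i)) ≠ 0)
    (ht1 : t (τ (strandLo i)) ≠ 1) (hc : c (t (τ (strandLo i))) = (t (τ (strandLo i)))⁻¹) :
    ((GassnerU K n (i.val + 1) (t (τ (strandLo i)))).map c)ᵀ * GassnerOmega t τ *
        GassnerU K n (i.val + 1) (t (τ (strandLo i))) =
      GassnerOmega t (τ * Equiv.swap (strandLo i) (strandHi i)) := by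
  have hLH := strandLo_lt_strandHi i
  have h1 : 1 - t (τ (strandLo i)) ≠ 0 := sub_ne_zero.2 ht1.symm
  ext r s
  -- Transposing turns both multiplications by the generator into column operations.
  rw [map_transpose_mul_mul_eq_transpose_mul_transpose, transpose_apply, GassnerU_map, hc,
    mul_GassnerU_apply]
  simp only [transpose_apply, mul_GassnerU_apply, GassnerOmega, of_apply, Equiv.Perm.mul_apply]
  have trichotomy (x : Fin n) :
      x = strandLo i ∨ x = strandHi i ∨ x ≠ strandLo i ∧ x ≠ strandHi i := by
    tauto
  obtain rfl | rfl | ⟨hrL, hrH⟩ := trichotomy r <;>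
  obtain rfl | rfl | ⟨hsL, hsH⟩ := trichotomy s
  all_goals simp [hLH.ne, hLH.ne', hLH.not_gt, *, Ne.symm, Equiv.swap_apply_of_ne_of_ne,
    lt_strandLo_iff_lt_strandHi, strandLo_lt_iff_strandHi_lt]
  all_goals first | (split_ifs <;> ring) | (field_simp; ring)

theorem isUnit_det_GassnerOmega {t : Fin n → K} (ht1 : ∀ j, t j ≠ 1) (τ : Equiv.Perm (Fin n)) :
    IsUnit (GassnerOmega t τ).det := by
  rw [det_of_isLowerTriangular _ fun r s (hrs : r < s) => by
    simp [GassnerOmega, hrs.ne, hrs.not_gt]]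
  refine IsUnit.mk0 _ <| Finset.prod_ne_zero_iff.2 fun r _ => ?_
  simpa [GassnerOmega] using inv_ne_zero (sub_ne_zero.2 (ht1 (τ r)).symm)

theorem isSesqIsometry_GassnerU {t : Fin n → K} (ht0 : ∀ j, t j ≠ 0) (ht1 : ∀ j, t j ≠ 1)
    {c : K →+* K} (hc : ∀ j, c (t j) = (t j)⁻¹)
    (τ : Equiv.Perm (Fin n)) (i : Fin (n - 1)) :
    IsSesqIsometry c (GassnerOmega t τ) (GassnerOmega t (τ * Equiv.swap (strandLo i) (strandHi i)))
      (GassnerU K n (i.val + 1) (t (τ (strandLo i)))) := by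
  have h := GassnerU_map_transpose_mul_GassnerOmega_mul t c τ i (ht0 _) (ht1 _) (hc _)
  exact ⟨isUnit_of_map_transpose_mul_mul_eq h (isUnit_det_GassnerOmega ht1 _), h⟩

theorem isSesqIsometry_GassnerU_inv {t : Fin n → K} (ht0 : ∀ j, t j ≠ 0) (ht1 : ∀ j, t j ≠ 1)
    {c : K →+* K} (hc : ∀ j, c (t j) = (t j)⁻¹)
    (τ : Equiv.Perm (Fin n)) (i : Fin (n - 1)) :
    IsSesqIsometry c (GassnerOmega t τ) (GassnerOmega t (τ * Equiv.swap (strandLo i) (strandHi i)))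
      (GassnerU K n (i.val + 1) (t (τ (strandHi i))))⁻¹ := by
  have h := isSesqIsometry_GassnerU ht0 ht1 hc (τ * Equiv.swap (strandLo i) (strandHi i)) i
  rw [Equiv.mul_swap_mul_self, Equiv.Perm.mul_apply, Equiv.swap_apply_left] at h
  exact h.inv

theorem isSesqIsometry_gassner {t : Fin n → K} (ht0 : ∀ j, t j ≠ 0) (ht1 : ∀ j, t j ≠ 1)
    {c : K →+* K} (hc : ∀ j, c (t j) = (t j)⁻¹)
    (w : List (Fin (n - 1) × Bool)) (τ : Equiv.Perm (Fin n)) :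
    IsSesqIsometry c (GassnerOmega t τ) (GassnerOmega t (τ * braidPerm n w)) (gassner t τ w) := by
  induction w generalizing τ with
  | nil => simpa [gassner, braidPerm] using IsSesqIsometry.one
  | cons p w ih =>
    obtain ⟨i, b⟩ := p
    have hstep : IsSesqIsometry c (GassnerOmega t τ)
        (GassnerOmega t (τ * Equiv.swap (strandLo i) (strandHi i)))
        (if b then GassnerU K n (i.val + 1) (t (τ (strandLo i)))
          else (GassnerU K n (i.val + 1) (t (τ (strandHi i))))⁻¹) := by
      cases b
      exacts [isSesqIsometry_GassnerU_inv ht0 ht1 hc τ i, isSesqIsometry_GassnerU ht0 ht1 hc τ i]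
    rw [braidPerm, ← mul_assoc]
    exact hstep.mul (ih _)

end Gassner

theorem gassner_unitarity_general {K : Type*} [Field K] (n : ℕ)
    (t : Fin n → K) (ht0 : ∀ j, t j ≠ 0) (ht1 : ∀ j, t j ≠ 1)
    (c : K →+* K) (hc : ∀ j, c (t j) = (t j)⁻¹)
    (w : List (Fin (n - 1) × Bool)) :
    IsUnit (gassner t 1 w) ∧
      GassnerOmega t (braidPerm n w) * (gassner t 1 w)⁻¹ =
        ((gassner t 1 w).map c)ᵀ * GassnerOmega t 1 := by
  have h := isSesqIsometry_gassner ht0 ht1 hc w 1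
  rw [one_mul] at h
  exact ⟨h.1, h.mul_inv_eq⟩

/-- Unitarity property of the Gassner invariant: for any braid word `w` on `n` strands
inducing the strand permutation `τ_k = braidPerm n w`, the Gassner invariant
`Γ(w) = gassner t 1 w` is invertible and satisfies `Ω(τ_k)·Γ(w)⁻¹ = Γ(w)̄ᵀ·Ω(ι)`,
where the bar is the entrywise application of the ring homomorphism `c`
(which satisfies `c (t_j) = t_j⁻¹`). -/
theorem gassner_unitarity {K : Type*} [Field K] (n : ℕ) (hn : 2 ≤ n)
    (t : Fin n → K) (ht0 : ∀ j, t j ≠ 0) (ht1 : ∀ j, t j ≠ 1)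
    (c : K →+* K) (hc : ∀ j, c (t j) = (t j)⁻¹)
    (w : List (Fin (n - 1) × Bool)) :
    IsUnit (gassner t 1 w) ∧
      GassnerOmega t (braidPerm n w) * (gassner t 1 w)⁻¹ =
        ((gassner t 1 w).map c)ᵀ * GassnerOmega t 1 :=
  gassner_unitarity_general n t ht0 ht1 c hc w
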